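/- arXiv:2207.10707 — 2 statements merged into one kernel-verified Lean document; each statement's English description precedes it below -/
import Mathlib

section
/- Let v0, v1 > 0 and a : N → ℝ with a n > 0, and fix a location m. If S ⊆ S' are finite sets with m ∉ S', then A(S' ∪ {m}) − A(S') ≤ A(S ∪ {m}) − A(S). That is, the marginal benefit of adding a drop box is nonincreasing in the set of already-selected drop boxes (the access function is submodular in this pairwise sense). -/
theorem access_submodular {α : Type*} [DecidableEq α]
    (v0 v1 : ℝ) (a : α → ℝ) (hv0 : 0 < v0) (hv1 : 0 < v1) (ha : ∀ n, 0 < a n)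
    (S S' : Finset α) (m : α) (hSS : S ⊆ S') (hm : m ∉ S') :
    (v1 + ∑ n ∈ insert m S', a n) / (v0 + v1 + ∑ n ∈ insert m S', a n) -
        (v1 + ∑ n ∈ S', a n) / (v0 + v1 + ∑ n ∈ S', a n) ≤
      (v1 + ∑ n ∈ insert m S, a n) / (v0 + v1 + ∑ n ∈ insert m S, a n) -
        (v1 + ∑ n ∈ S, a n) / (v0 + v1 + ∑ n ∈ S, a n) := by
  have hmS : m ∉ S := fun h => hm (hSS h)
  rw [Finset.sum_insert hmS, Finset.sum_insert hm]
  set s : ℝ := ∑ n ∈ S, a n with hsdef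
  set t : ℝ := ∑ n ∈ S', a n with htdef
  have hs : 0 ≤ s := Finset.sum_nonneg fun n _ => (ha n).le
  have hst : s ≤ t :=
    Finset.sum_le_sum_of_subset_of_nonneg hSS fun n _ _ => (ha n).le
  have he : 0 < a m := ha m
  have d1 : 0 < v0 + v1 + s := by linarith
  have d2 : 0 < v0 + v1 + (a m + s) := by linarith
  have d3 : 0 < v0 + v1 + t := by linarith
  have d4 : 0 < v0 + v1 + (a m + t) := by linarith
  rw [div_sub_div _ _ (ne_of_gt d4) (ne_of_gt d3),
      div_sub_div _ _ (ne_of_gt d2) (ne_of_gt d1),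
      div_le_div_iff₀ (by positivity) (by positivity)]
  nlinarith [mul_pos d1 d2, mul_pos d3 d4, mul_nonneg (mul_nonneg hv0.le he.le) (mul_nonneg (sub_nonneg.2 hst) (by linarith : (0:ℝ) ≤ 2*v0 + 2*v1 + a m + s + t))]
end

section
/- Strict dominance version: under the hypotheses of the dominance lemma with the additional assumption v0_ŵ > v0_w, the inequality between access values is strict: for every finite N' with T ⊆ N' ⊆ N, A_ŵ(N') < A_w(N'). -/
/-!
Write `S = v1 + Σ_{n∈N'} a_n`, so that the access value is `S / (v0 + S)`. Splitting `N'` into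
`T` and `N' \ T`, the hypotheses give `S_ŵ ≤ S_w`. Since `x ↦ x / (c + x)` is increasing for
`c ≥ 0` and `c ↦ x / (c + x)` is strictly decreasing for `x > 0`,
`S_ŵ / (v0_ŵ + S_ŵ) < S_ŵ / (v0_w + S_ŵ) ≤ S_w / (v0_w + S_w)`.
-/

open Finset

theorem add_sum_le_add_sum_of_le_on_sdiff {α M : Type*} [DecidableEq α] [AddCommMonoid M]
    [PartialOrder M] [IsOrderedAddMonoid M] {T N' N : Finset α} {f g : α → M} {c d : M}
    (hTN' : T ⊆ N') (hN'N : N' ⊆ N) (hT : c + ∑ n ∈ T, f n ≤ d + ∑ n ∈ T, g n)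
    (hle : ∀ n ∈ N \ T, f n ≤ g n) :
    c + ∑ n ∈ N', f n ≤ d + ∑ n ∈ N', g n := by
  rw [← sum_sdiff hTN' (f := f), ← sum_sdiff hTN' (f := g), add_left_comm c, add_left_comm d]
  exact add_le_add (sum_le_sum fun n hn => hle n (sdiff_subset_sdiff hN'N le_rfl hn)) hT

theorem div_add_self_le_div_add_self {K : Type*} [Field K] [LinearOrder K] [IsStrictOrderedRing K]
    {c x y : K} (hc : 0 ≤ c) (hx : 0 < x) (hxy : x ≤ y) :
    x / (c + x) ≤ y / (c + y) := by
  rw [div_le_div_iff₀ (by positivity) (by linarith)]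
  nlinarith

theorem access_strict_dominance_general {α : Type*} [DecidableEq α]
    (v0w v1w v0h v1h : ℝ) (aw ah : α → ℝ)
    (hv0w : 0 < v0w) (hv1h : 0 < v1h)
    (hah : ∀ n, 0 < ah n)
    (N T : Finset α)
    (h0 : v0w < v0h)
    (h1 : v1h + ∑ n ∈ T, ah n ≤ v1w + ∑ n ∈ T, aw n)
    (h2 : ∀ n ∈ N \ T, ah n ≤ aw n) :
    ∀ N' : Finset α, T ⊆ N' → N' ⊆ N →
      (v1h + ∑ n ∈ N', ah n) / (v0h + v1h + ∑ n ∈ N', ah n) <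
        (v1w + ∑ n ∈ N', aw n) / (v0w + v1w + ∑ n ∈ N', aw n) := by
  intro N' hTN' hN'N
  have hle := add_sum_le_add_sum_of_le_on_sdiff hTN' hN'N h1 h2
  have hpos : 0 < v1h + ∑ n ∈ N', ah n :=
    add_pos_of_pos_of_nonneg hv1h (sum_nonneg fun n _ => (hah n).le)
  rw [add_assoc v0h, add_assoc v0w]
  calc _ < (v1h + ∑ n ∈ N', ah n) / (v0w + (v1h + ∑ n ∈ N', ah n)) :=
        div_lt_div_of_pos_left hpos (by positivity) (by linarith)
    _ ≤ _ := div_add_self_le_div_add_self hv0w.le hpos hle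

theorem access_strict_dominance {α : Type*} [DecidableEq α]
    (v0w v1w v0h v1h : ℝ) (aw ah : α → ℝ)
    (hv0w : 0 < v0w) (hv1w : 0 < v1w) (hv0h : 0 < v0h) (hv1h : 0 < v1h)
    (haw : ∀ n, 0 < aw n) (hah : ∀ n, 0 < ah n)
    (N T : Finset α) (hTN : T ⊆ N)
    (h0 : v0w < v0h)
    (h1 : v1h + ∑ n ∈ T, ah n ≤ v1w + ∑ n ∈ T, aw n)
    (h2 : ∀ n ∈ N \ T, ah n ≤ aw n) :
    ∀ N' : Finset α, T ⊆ N' → N' ⊆ N →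
      (v1h + ∑ n ∈ N', ah n) / (v0h + v1h + ∑ n ∈ N', ah n) <
        (v1w + ∑ n ∈ N', aw n) / (v0w + v1w + ∑ n ∈ N', aw n) :=
  access_strict_dominance_general v0w v1w v0h v1h aw ah hv0w hv1h hah N T h0 h1 h2
end
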